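/- Suppose the pair (A, C) is detectable, ρ(A) > 0, and ρ(A) < (λ_m + λ_2)/(λ_m − λ_2). Let W = I_m − αL with α a real number satisfying α > 0 and λ_2^{-1}(1 − ρ(A)^{-1}) < α < λ_m^{-1}(1 + ρ(A)^{-1}). Then for every complex λ with |λ| ≥ 1 and every partition of {1, …, m} into disjoint sets {i_1, …, i_l} and {i_{l+1}, …, i_m}, the block matrix whose first block row is (W ⊗ A − λ I_{mn}, B̄_{i_1}, …, B̄_{i_l}) and whose remaining block rows are (C̄_{i_j}, 0, …, 0) for j = l+1, …, m has rank at least nm over ℂ. -/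

import Mathlib

open Matrix Kronecker Polynomial

/-!
Write `W = U diag(d) U*` with `U` unitary. The `d p` are the numbers `1 - α λᵢ`; the bounds on `α`
make every one of them except `1 - α λ₁ = 1` smaller than `ρ(A)⁻¹` in modulus. A vector
`x = vec X` satisfies `(W ⊗ B) x = λ x` iff `B X Wᵀ = λ X`, and in the eigenbasis of `W` the
columns `z_p` of `X U` satisfy `d_p B z_p = λ z_p`. As `|λ| ≥ 1 > |d_p| ρ(B)` unless `d_p = 1`,
only the `1`-eigenspace of `W` survives: `X W = X`, so by connectivity all columns of `X` are one
vector `y` with `B y = λ y`.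

If `T = ∅`, a kernel vector of the first `nm` columns gives such a `y` (with `B = A`) killed by
every `Cᵢ`, so `y = 0` by detectability. If `i₀ ∈ T`, a left kernel vector of the first `nm`
rows gives such a `y` (with `B = Aᵀ`) that vanishes because `B̄_{i₀}` reads off its `i₀`-block.
Either way `nm` columns or rows are independent.
-/

/-- The matrix E_{N_i} whose columns are the standard basis vectors e_j of ℝ^m for
j in the closed neighborhood N_i of vertex i (the neighbors of i together with i). -/
def Ebar {m : ℕ} (G : SimpleGraph (Fin m)) [DecidableRel G.Adj] (i : Fin m) :
    Matrix (Fin m) {j : Fin m // G.Adj i j ∨ j = i} ℝ :=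
  fun k j => if k = j.1 then 1 else 0

/-- B̄ᵢ = E_{N_i} ⊗ Iₙ. -/
def Bbar {m : ℕ} (n : ℕ) (G : SimpleGraph (Fin m)) [DecidableRel G.Adj] (i : Fin m) :
    Matrix (Fin m × Fin n) ({j : Fin m // G.Adj i j ∨ j = i} × Fin n) ℝ :=
  Ebar G i ⊗ₖ (1 : Matrix (Fin n) (Fin n) ℝ)

namespace Matrix

section Spectrum

variable {κ K : Type*} [Fintype κ] [DecidableEq κ] [Field K]

theorem mem_spectrum_of_mulVec_eq_smul {B : Matrix κ κ K} {μ : K} {v : κ → K} (hv : v ≠ 0)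
    (h : B *ᵥ v = μ • v) : μ ∈ spectrum K B := by
  rw [← spectrum_toLin', ← Module.End.hasEigenvalue_iff_mem_spectrum]
  exact Module.End.hasEigenvalue_of_hasEigenvector ⟨Module.End.mem_eigenspace_iff.mpr h, hv⟩

theorem exists_mulVec_eq_smul_of_mem_spectrum {B : Matrix κ κ K} {μ : K}
    (h : μ ∈ spectrum K B) : ∃ v ≠ 0, B *ᵥ v = μ • v := by
  rw [← spectrum_toLin', ← Module.End.hasEigenvalue_iff_mem_spectrum] at h
  obtain ⟨v, hv⟩ := h.exists_hasEigenvector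
  exact ⟨v, hv.2, Module.End.mem_eigenspace_iff.mp hv.1⟩

theorem spectrum_transpose (B : Matrix κ κ K) : spectrum K Bᵀ = spectrum K B := by
  ext μ
  simp only [mem_spectrum_iff_isRoot_charpoly, charpoly_transpose]

end Spectrum

section Kronecker

variable {ι κ R : Type*} [Fintype ι] [DecidableEq ι] [Fintype κ] [DecidableEq κ] [CommRing R]

theorem map_kronecker {l m n p S : Type*} [CommRing S] (f : R →+* S) (A : Matrix l m R)
    (B : Matrix n p R) : (A ⊗ₖ B).map f = A.map f ⊗ₖ B.map f := by
  ext; simp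

theorem kronecker_sub_smul_one_mulVec_vec_eq_zero_iff (W : Matrix ι ι R) (A : Matrix κ κ R)
    (c : R) (X : Matrix κ ι R) : (W ⊗ₖ A - c • 1) *ᵥ vec X = 0 ↔ A * X * Wᵀ = c • X := by
  rw [sub_mulVec, smul_mulVec, one_mulVec, kronecker_mulVec_vec, sub_eq_zero, ← vec_smul,
    vec_inj]

theorem vec_vecMul_kronecker_sub_smul_one_eq_zero_iff (W : Matrix ι ι R) (A : Matrix κ κ R)
    (c : R) (X : Matrix κ ι R) : vec X ᵥ* (W ⊗ₖ A - c • 1) = 0 ↔ Aᵀ * X * W = c • X := by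
  rw [vecMul_sub, vecMul_smul, vecMul_one, vec_vecMul_kronecker, sub_eq_zero, ← vec_smul,
    vec_inj]

end Kronecker

section Rank

variable {m₁ m₂ n₁ n₂ K : Type*} [Fintype n₁] [Fintype n₂] [Field K]

theorem card_le_rank_fromBlocks_of_mulVec_eq_zero (P : Matrix m₁ n₁ K) (Q : Matrix m₁ n₂ K)
    (R : Matrix m₂ n₁ K) (S : Matrix m₂ n₂ K) (h : ∀ x, P *ᵥ x = 0 → R *ᵥ x = 0 → x = 0) :
    Fintype.card n₁ ≤ (fromBlocks P Q R S).rank := by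
  have hinj : Function.Injective ((fromBlocks P Q R S).submatrix id Sum.inl).mulVecLin := by
    rw [← LinearMap.ker_eq_bot, LinearMap.ker_eq_bot']
    intro x hx
    refine h x (funext fun i => ?_) (funext fun i => ?_)
    · simpa [mulVec, dotProduct] using congrFun hx (Sum.inl i)
    · simpa [mulVec, dotProduct] using congrFun hx (Sum.inr i)
  calc Fintype.card n₁ = ((fromBlocks P Q R S).submatrix id Sum.inl).rank := by
        rw [rank, LinearMap.finrank_range_of_inj hinj, Module.finrank_fintype_fun_eq_card]
    _ ≤ (fromBlocks P Q R S).rank := rank_submatrix_le _ _ _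

theorem card_le_rank_fromBlocks_of_vecMul_eq_zero [Fintype m₁] [Fintype m₂]
    (P : Matrix m₁ n₁ K) (Q : Matrix m₁ n₂ K) (R : Matrix m₂ n₁ K) (S : Matrix m₂ n₂ K)
    (h : ∀ u, u ᵥ* P = 0 → u ᵥ* Q = 0 → u = 0) :
    Fintype.card m₁ ≤ (fromBlocks P Q R S).rank := by
  rw [← rank_transpose, fromBlocks_transpose]
  refine card_le_rank_fromBlocks_of_mulVec_eq_zero _ _ _ _ fun u hP hQ => h u ?_ ?_
  · rwa [mulVec_transpose] at hP
  · rwa [mulVec_transpose] at hQ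

end Rank

section FixedPoints

variable {ι κ : Type*} [Fintype ι] [DecidableEq ι] [Fintype κ] [DecidableEq κ]

theorem eq_zero_of_smul_mulVec_eq_smul {B : Matrix κ κ ℂ} {ρ : ℝ}
    (hB : ∀ μ ∈ spectrum ℂ B, ‖μ‖ ≤ ρ) {d c : ℂ} (hd : ‖d‖ * ρ < 1) (hc : 1 ≤ ‖c‖)
    {v : κ → ℂ} (h : d • (B *ᵥ v) = c • v) : v = 0 := by
  by_contra hv
  have hc0 : c ≠ 0 := norm_pos_iff.mp (by linarith)
  have hd0 : d ≠ 0 := by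
    rintro rfl
    exact hv ((smul_eq_zero.mp (h.symm.trans (zero_smul ℂ _))).resolve_left hc0)
  have hmem : c / d ∈ spectrum ℂ B := by
    refine mem_spectrum_of_mulVec_eq_smul hv ?_
    rw [div_eq_inv_mul, mul_smul, ← h, inv_smul_smul₀ hd0]
  have := hB _ hmem
  rw [norm_div, div_le_iff₀ (norm_pos_iff.mpr hd0)] at this
  nlinarith

theorem mul_diagonal_eq_self_of_mul_mul_diagonal_eq_smul {B : Matrix κ κ ℂ} {ρ : ℝ}
    (hB : ∀ μ ∈ spectrum ℂ B, ‖μ‖ ≤ ρ) {d : ι → ℂ} (hd : ∀ p, d p ≠ 1 → ‖d p‖ * ρ < 1)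
    {c : ℂ} (hc : 1 ≤ ‖c‖) {Z : Matrix κ ι ℂ} (hZ : B * Z * diagonal d = c • Z) :
    Z * diagonal d = Z := by
  ext k p
  rw [mul_diagonal]
  by_cases hp : d p = 1
  · rw [hp, mul_one]
  have hcol : d p • (B *ᵥ Z.col p) = c • Z.col p := by
    ext k'
    have h := congrFun (congrFun hZ k') p
    rw [mul_diagonal, mul_apply] at h
    simp only [Pi.smul_apply, smul_eq_mul, mulVec, dotProduct, col_apply, smul_apply] at h ⊢
    linear_combination h
  have := congrFun (eq_zero_of_smul_mulVec_eq_smul hB (hd p hp) hc hcol) k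
  simp only [col_apply, Pi.zero_apply] at this
  simp [this]

theorem mul_eq_self_of_mul_mul_eq_smul {B : Matrix κ κ ℂ} {ρ : ℝ}
    (hB : ∀ μ ∈ spectrum ℂ B, ‖μ‖ ≤ ρ) {U : Matrix ι ι ℂ} (hU : U ∈ unitary (Matrix ι ι ℂ))
    {d : ι → ℂ} (hd : ∀ p, d p ≠ 1 → ‖d p‖ * ρ < 1) {c : ℂ} (hc : 1 ≤ ‖c‖)
    {X : Matrix κ ι ℂ} (hX : B * X * (U * diagonal d * star U) = c • X) :
    X * (U * diagonal d * star U) = X := by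
  have hZ : B * (X * U) * diagonal d = c • (X * U) := by
    calc B * (X * U) * diagonal d = B * X * (U * diagonal d * star U) * U := by
          simp only [Matrix.mul_assoc, Unitary.star_mul_self_of_mem hU, Matrix.mul_one]
      _ = c • (X * U) := by rw [hX, smul_mul]
  calc X * (U * diagonal d * star U) = X * U * diagonal d * star U := by
        simp only [Matrix.mul_assoc]
    _ = X := by
        rw [mul_diagonal_eq_self_of_mul_mul_diagonal_eq_smul hB hd hc hZ, Matrix.mul_assoc,
          Unitary.mul_star_self_of_mem hU, Matrix.mul_one]

end FixedPoints

theorem eq_zero_of_detectable {ι κ : Type*} [Fintype κ] {r : ι → Type*} [∀ i, Fintype (r i)]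
    {A : Matrix κ κ ℂ} {C : ∀ i, Matrix (r i) κ ℂ}
    (hdet : ∀ c : ℂ, 1 ≤ ‖c‖ → ∀ v : κ → ℂ, v ≠ 0 → A *ᵥ v = c • v → ∃ i, C i *ᵥ v ≠ 0)
    {c : ℂ} (hc : 1 ≤ ‖c‖) {X : Matrix κ ι ℂ} (hcols : ∀ k i j, X k i = X k j)
    (hAX : A * X = c • X) (hC : ∀ i, C i *ᵥ X.col i = 0) : X = 0 := by
  by_contra hX
  obtain ⟨k, i, hki⟩ : ∃ k i, X k i ≠ 0 := by
    by_contra! h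
    exact hX (ext h)
  have hv : X.col i ≠ 0 := fun h => hki (congrFun h k)
  obtain ⟨j, hj⟩ := hdet c hc _ hv (funext fun k => congrFun (congrFun hAX k) i)
  exact hj (by rw [show X.col i = X.col j from funext fun k => hcols k i j, hC j])

section KroneckerKernel

variable {ι κ : Type*} [Fintype ι] [DecidableEq ι] [Fintype κ] [DecidableEq κ]

theorem eq_zero_of_kronecker_sub_smul_one_mulVec_eq_zero {r : ι → Type*} [∀ i, Fintype (r i)]
    {W : Matrix ι ι ℂ} (hW : Wᵀ = W) {A : Matrix κ κ ℂ} {C : ∀ i, Matrix (r i) κ ℂ}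
    (hdet : ∀ c : ℂ, 1 ≤ ‖c‖ → ∀ v : κ → ℂ, v ≠ 0 → A *ᵥ v = c • v → ∃ i, C i *ᵥ v ≠ 0)
    {c : ℂ} (hc : 1 ≤ ‖c‖)
    (hfix : ∀ X : Matrix κ ι ℂ, A * X * W = c • X → X * W = X ∧ ∀ k i j, X k i = X k j)
    {x : ι × κ → ℂ} (hx : (W ⊗ₖ A - c • 1) *ᵥ x = 0) (hC : ∀ i, C i *ᵥ (fun k => x (i, k)) = 0) :
    x = 0 := by
  -- `vec` stacks columns, so `x = vec X`
  set X : Matrix κ ι ℂ := of fun k i => x (i, k)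
  have hX := (kronecker_sub_smul_one_mulVec_vec_eq_zero_iff W A c X).mp hx
  rw [hW] at hX
  obtain ⟨hXW, hcols⟩ := hfix X hX
  have hAX : A * X = c • X := by rwa [Matrix.mul_assoc, hXW] at hX
  have hX0 := eq_zero_of_detectable hdet hc hcols hAX hC
  funext p
  exact congrFun (congrFun hX0 p.2) p.1

theorem eq_zero_of_vecMul_kronecker_sub_smul_one_eq_zero {W : Matrix ι ι ℂ} {A : Matrix κ κ ℂ}
    {c : ℂ} (hfix : ∀ X : Matrix κ ι ℂ, Aᵀ * X * W = c • X → ∀ k i j, X k i = X k j)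
    {u : ι × κ → ℂ} (hu : u ᵥ* (W ⊗ₖ A - c • 1) = 0) {i₀ : ι} (hi₀ : ∀ k, u (i₀, k) = 0) :
    u = 0 := by
  set X : Matrix κ ι ℂ := of fun k i => u (i, k)
  have hcols := hfix X ((vec_vecMul_kronecker_sub_smul_one_eq_zero_iff W A c X).mp hu)
  funext p
  exact (hcols p.2 p.1 i₀).trans (hi₀ p.2)

end KroneckerKernel

end Matrix

theorem Matrix.map_ofReal_one_sub_smul {ι : Type*} [DecidableEq ι] (α : ℝ) (L : Matrix ι ι ℝ) :
    (1 - α • L).map Complex.ofReal = 1 - (α : ℂ) • L.map Complex.ofReal := by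
  ext a b
  by_cases h : a = b <;> simp [h]

theorem Matrix.IsHermitian.exists_unitary_map_ofReal_eq_diagonal {ι : Type*} [Fintype ι]
    [DecidableEq ι] {L : Matrix ι ι ℝ} (hL : L.IsHermitian) {e : ι → ℝ}
    (he : L.charpoly = ∏ i, (X - C (e i))) :
    ∃ U ∈ unitary (Matrix ι ι ℂ), ∃ σ : ι → ι,
      L.map Complex.ofReal = U * diagonal (fun p => (e (σ p) : ℂ)) * star U := by
  have hH : (L.map Complex.ofReal).IsHermitian := hL.map _ fun _ => by simp
  have hσ : ∀ p, ∃ i, hH.eigenvalues p = e i := by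
    intro p
    have hroot : ((L.map Complex.ofRealHom).charpoly).IsRoot (hH.eigenvalues p) := by
      refine isRoot_of_mem_roots ?_
      rw [show L.map Complex.ofRealHom = L.map Complex.ofReal from rfl,
        hH.roots_charpoly_eq_eigenvalues]
      exact Multiset.mem_map_of_mem _ (Finset.mem_univ_val p)
    rw [charpoly_map, he, Polynomial.map_prod, IsRoot, eval_prod,
      Finset.prod_eq_zero_iff] at hroot
    obtain ⟨i, -, hi⟩ := hroot
    exact ⟨i, by simpa [sub_eq_zero] using hi⟩
  choose σ hσ using hσ
  refine ⟨hH.eigenvectorUnitary, hH.eigenvectorUnitary.2, σ, ?_⟩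
  conv_lhs => rw [hH.spectral_theorem]
  simp [Function.comp_def, hσ]

theorem abs_one_sub_mul_mul_lt_one {ρ α ℓ₂ ℓ ℓₘ : ℝ} (hρ : 0 < ρ) (hα : 0 < α) (hℓ₂ : 0 < ℓ₂)
    (h₂ : ℓ₂ ≤ ℓ) (hₘ : ℓ ≤ ℓₘ) (hlo : ℓ₂⁻¹ * (1 - ρ⁻¹) < α) (hhi : α < ℓₘ⁻¹ * (1 + ρ⁻¹)) :
    |1 - α * ℓ| * ρ < 1 := by
  have hℓₘ : 0 < ℓₘ := by linarith
  rw [inv_mul_lt_iff₀ hℓ₂] at hlo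
  rw [lt_inv_mul_iff₀ hℓₘ] at hhi
  rw [← lt_div_iff₀ hρ, one_div, abs_lt]
  constructor <;> nlinarith [mul_le_mul_of_nonneg_left h₂ hα.le, mul_le_mul_of_nonneg_left hₘ hα.le]

theorem Matrix.IsHermitian.exists_unitary_map_one_sub_smul_eq_diagonal {ι : Type*} [Fintype ι]
    [DecidableEq ι] {L : Matrix ι ι ℝ} (hL : L.IsHermitian) {e : ι → ℝ}
    (hchar : L.charpoly = ∏ i, (X - C (e i))) {ℓ₂ ℓₘ ρ α : ℝ}
    (he : ∀ i, e i = 0 ∨ ℓ₂ ≤ e i ∧ e i ≤ ℓₘ) (hℓ₂ : 0 < ℓ₂) (hρ : 0 < ρ) (hα : 0 < α)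
    (hlo : ℓ₂⁻¹ * (1 - ρ⁻¹) < α) (hhi : α < ℓₘ⁻¹ * (1 + ρ⁻¹)) :
    ∃ U ∈ unitary (Matrix ι ι ℂ), ∃ d : ι → ℂ,
      (1 - α • L).map Complex.ofReal = U * diagonal d * star U ∧
        ∀ p, d p ≠ 1 → ‖d p‖ * ρ < 1 := by
  obtain ⟨U, hU, σ, hLU⟩ := hL.exists_unitary_map_ofReal_eq_diagonal hchar
  refine ⟨U, hU, fun p => ((1 - α * e (σ p) : ℝ) : ℂ), ?_, fun p hp => ?_⟩
  · have hdiag : diagonal (fun p => ((1 - α * e (σ p) : ℝ) : ℂ))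
        = 1 - (α : ℂ) • diagonal (fun p => (e (σ p) : ℂ)) := by
      ext a b; by_cases h : a = b <;> simp [h]
    rw [map_ofReal_one_sub_smul, hLU, hdiag, Matrix.mul_sub, Matrix.sub_mul, Matrix.mul_one,
      Unitary.mul_star_self_of_mem hU, Matrix.mul_smul, Matrix.smul_mul]
  · rcases he (σ p) with h0 | ⟨h₂, hₘ⟩
    · exact absurd (by simp [h0]) hp
    · rw [Complex.norm_real, Real.norm_eq_abs]
      exact abs_one_sub_mul_mul_lt_one hρ hα hℓ₂ h₂ hₘ hlo hhi

namespace SimpleGraph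

variable {V : Type*} [Fintype V] [DecidableEq V] {G : SimpleGraph V} [DecidableRel G.Adj]

theorem eq_of_lapMatrix_map_ofReal_mulVec_eq_zero (hG : G.Connected) {v : V → ℂ}
    (hv : (G.lapMatrix ℝ).map Complex.ofReal *ᵥ v = 0) (i j : V) : v i = v j := by
  have hre : G.lapMatrix ℝ *ᵥ (fun k => (v k).re) = 0 := by
    funext a
    simpa [mulVec, dotProduct, Complex.re_sum] using congrArg Complex.re (congrFun hv a)
  have him : G.lapMatrix ℝ *ᵥ (fun k => (v k).im) = 0 := by
    funext a
    simpa [mulVec, dotProduct, Complex.im_sum] using congrArg Complex.im (congrFun hv a)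
  have hij := hG.preconnected i j
  exact Complex.ext (lapMatrix_mulVec_eq_zero_iff_forall_reachable G |>.mp hre i j hij)
    (lapMatrix_mulVec_eq_zero_iff_forall_reachable G |>.mp him i j hij)

theorem eq_of_mul_map_one_sub_smul_lapMatrix_eq_self {κ : Type*} (hG : G.Connected) {α : ℝ}
    (hα : α ≠ 0) {X : Matrix κ V ℂ} (hX : X * (1 - α • G.lapMatrix ℝ).map Complex.ofReal = X)
    (k : κ) (i j : V) : X k i = X k j := by
  have hXL : X * (G.lapMatrix ℝ).map Complex.ofReal = 0 := by
    rw [map_ofReal_one_sub_smul, Matrix.mul_sub, Matrix.mul_one, Matrix.mul_smul, sub_eq_self,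
      smul_eq_zero] at hX
    exact hX.resolve_left (by exact_mod_cast hα)
  refine eq_of_lapMatrix_map_ofReal_mulVec_eq_zero hG ?_ i j
  rw [← ((G.isSymm_lapMatrix ℝ).map Complex.ofReal).eq, mulVec_transpose]
  exact congrFun hXL k

end SimpleGraph

/-- With L the Laplacian of a connected graph on m > 2 vertices,
eigenvalues 0 = λ₁ < λ₂ ≤ ⋯ ≤ λₘ, (A, C) detectable, 0 < ρ(A) < (λₘ + λ₂)/(λₘ − λ₂),
and W = I − αL with α > 0 and λ₂⁻¹(1 − ρ(A)⁻¹) < α < λₘ⁻¹(1 + ρ(A)⁻¹): for every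
λ ∈ ℂ with |λ| ≥ 1 and every partition of {1,…,m} into a set T = {i₁,…,i_l} and its
complement {i_{l+1},…,i_m}, the block matrix with first block row
(W ⊗ A − λI, B̄_{i₁}, …, B̄_{i_l}) and remaining block rows (C̄_{i_j}, 0, …, 0),
j = l+1, …, m, has rank at least nm over ℂ. -/
theorem stmt11 (m n : ℕ) (hm : 2 < m)
    (G : SimpleGraph (Fin m)) [DecidableRel G.Adj]
    (L : Matrix (Fin m) (Fin m) ℝ) (hL : L = G.lapMatrix ℝ)
    (hconn : G.Connected)
    (eig : Fin m → ℝ) (heig_mono : Monotone eig)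
    (hchar : L.charpoly = ∏ i, (X - C (eig i)))
    (heig0 : eig ⟨0, by omega⟩ = 0) (heig1 : 0 < eig ⟨1, by omega⟩)
    (A : Matrix (Fin n) (Fin n) ℝ)
    (r : Fin m → ℕ) (Cm : ∀ i : Fin m, Matrix (Fin (r i)) (Fin n) ℝ)
    -- (A, C) is detectable
    (hdet : ∀ lam : ℂ, 1 ≤ ‖lam‖ → ∀ v : Fin n → ℂ, v ≠ 0 →
      (A.map Complex.ofReal).mulVec v = lam • v →
        ∃ i, ((Cm i).map Complex.ofReal).mulVec v ≠ 0)
    -- ρA is the spectral radius of A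
    (ρA : ℝ) (hρ_pos : 0 < ρA)
    (hρ_ub : ∀ μ : ℂ, (∃ v : Fin n → ℂ, v ≠ 0 ∧
        (A.map Complex.ofReal).mulVec v = μ • v) → ‖μ‖ ≤ ρA)
    (α : ℝ) (hα_pos : 0 < α)
    (hα_lo : (eig ⟨1, by omega⟩)⁻¹ * (1 - ρA⁻¹) < α)
    (hα_hi : α < (eig ⟨m - 1, by omega⟩)⁻¹ * (1 + ρA⁻¹))
    (W : Matrix (Fin m) (Fin m) ℝ) (hW : W = 1 - α • L) :
    ∀ lam : ℂ, 1 ≤ ‖lam‖ →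
      ∀ T : Finset (Fin m),
        n * m ≤
          (Matrix.fromBlocks
            ((W ⊗ₖ A).map Complex.ofReal -
              lam • (1 : Matrix (Fin m × Fin n) (Fin m × Fin n) ℂ))
            (Matrix.of fun (p : Fin m × Fin n)
                (q : Σ j : {j : Fin m // j ∈ T},
                  ({k : Fin m // G.Adj j.1 k ∨ k = j.1} × Fin n)) =>
              ((Bbar n G q.1.1).map Complex.ofReal) p q.2)
            (Matrix.of fun (q : Σ j : {j : Fin m // j ∉ T}, Fin (r j.1))
                (p : Fin m × Fin n) =>
              if (q.1 : Fin m) = p.1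
                then ((Cm q.1.1).map Complex.ofReal) q.2 p.2 else 0)
            0).rank := by
  intro lam hlam T
  subst hL hW
  have heig : ∀ i, eig i = 0 ∨ eig ⟨1, by omega⟩ ≤ eig i ∧ eig i ≤ eig ⟨m - 1, by omega⟩ :=
    fun i => (Nat.eq_zero_or_pos i).imp (fun h => heig0 ▸ congrArg eig (Fin.ext h))
      fun h => ⟨heig_mono (Fin.mk_le_of_le_val h),
        heig_mono (Fin.le_iff_val_le_val.mpr (Nat.le_sub_one_of_lt i.2))⟩
  obtain ⟨U, hU, d, hWU, hd⟩ :=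
    (G.isHermitian_lapMatrix ℝ).exists_unitary_map_one_sub_smul_eq_diagonal
      hchar heig heig1 hρ_pos hα_pos hα_lo hα_hi
  set Wc := (1 - α • G.lapMatrix ℝ).map Complex.ofReal
  have hfix : ∀ B : Matrix (Fin n) (Fin n) ℂ, (∀ μ ∈ spectrum ℂ B, ‖μ‖ ≤ ρA) →
      ∀ X : Matrix (Fin n) (Fin m) ℂ, B * X * Wc = lam • X →
        X * Wc = X ∧ ∀ k i j, X k i = X k j := by
    intro B hB X hX
    have hXW : X * Wc = X := by
      rw [hWU] at hX ⊢
      exact mul_eq_self_of_mul_mul_eq_smul hB hU hd hlam hX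
    exact ⟨hXW, SimpleGraph.eq_of_mul_map_one_sub_smul_lapMatrix_eq_self hconn hα_pos.ne' hXW⟩
  have hA : ∀ μ ∈ spectrum ℂ (A.map Complex.ofReal), ‖μ‖ ≤ ρA := fun μ hμ =>
    hρ_ub μ (exists_mulVec_eq_smul_of_mem_spectrum hμ)
  rw [show ((1 - α • G.lapMatrix ℝ) ⊗ₖ A).map Complex.ofReal = Wc ⊗ₖ A.map Complex.ofReal from
      map_kronecker Complex.ofRealHom _ _,
    show n * m = Fintype.card (Fin m × Fin n) by simp [mul_comm]]
  rcases T.eq_empty_or_nonempty with rfl | ⟨i₀, hi₀⟩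
  · refine card_le_rank_fromBlocks_of_mulVec_eq_zero _ _ _ _ fun x hx hC => ?_
    have hWc : Wcᵀ = Wc := ((isSymm_one.sub ((G.isSymm_lapMatrix ℝ).smul α)).map _).eq
    refine eq_zero_of_kronecker_sub_smul_one_mulVec_eq_zero hWc hdet hlam (hfix _ hA) hx
      fun i => funext fun k => ?_
    simpa [mulVec, dotProduct, Fintype.sum_prod_type] using
      congrFun hC ⟨⟨i, Finset.notMem_empty i⟩, k⟩
  · refine card_le_rank_fromBlocks_of_vecMul_eq_zero _ _ _ _ fun u hu hB => ?_
    refine eq_zero_of_vecMul_kronecker_sub_smul_one_eq_zero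
      (fun X hX => (hfix _ (by rwa [spectrum_transpose]) X hX).2) hu (i₀ := i₀) fun l => ?_
    simpa [vecMul, dotProduct, Bbar, Ebar, one_apply, Fintype.sum_prod_type,
      apply_ite Complex.ofReal] using congrFun hB ⟨⟨i₀, hi₀⟩, ⟨i₀, Or.inr rfl⟩, l⟩
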